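/- arXiv:2002.00373 — 3 statements merged into one kernel-verified Lean document; each statement's English description precedes it below -/
import Mathlib

section
/- Let a₁,a₂,a₃,a₄ ∈ ℝ, let U ⊆ ℝ⁴ be open, and let u : U → ℝ be a smooth solution on U of the equation a₄[(x₁−x₂)u₃u₁₂+(x₂−x₃)u₁u₂₃+(x₃−x₁)u₂u₁₃] + a₃[(x₄−x₂)u₁u₂₄+(x₂−x₁)u₄u₁₂+(x₁−x₄)u₂u₁₄] + a₂[(x₃−x₄)u₁u₃₄+(x₁−x₃)u₄u₁₃+(x₄−x₁)u₃u₁₄] + a₁[(x₃−x₂)u₄u₂₃+(x₂−x₄)u₃u₂₄+(x₄−x₃)u₂u₃₄] = 0. Then for every smooth function φ : ℝ → ℝ, the composition v = φ ∘ u is also a solution of the same equation on U. -/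
open scoped ContDiff

noncomputable section

/-- `pd i u x` is the partial derivative `∂u/∂xᵢ` at `x`. -/
def pd {n : ℕ} (i : Fin n) (u : (Fin n → ℝ) → ℝ) (x : Fin n → ℝ) : ℝ :=
  fderiv ℝ u x (Pi.single i 1)

/-- `pd2 i j u x` is the second partial derivative `∂²u/∂xᵢ∂xⱼ` at `x`. -/
def pd2 {n : ℕ} (i j : Fin n) (u : (Fin n → ℝ) → ℝ) (x : Fin n → ℝ) : ℝ :=
  pd i (pd j u) x

/-- Lie bracket of vector fields : `[X,Y](x) = DY(x)(X(x)) − DX(x)(Y(x))`. -/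
def lieBr {n : ℕ} (X Y : (Fin n → ℝ) → (Fin n → ℝ)) (x : Fin n → ℝ) : Fin n → ℝ :=
  fderiv ℝ Y x (X x) - fderiv ℝ X x (Y x)

/-- The 4D linear combination of four copies of the deformed Veronese web equation
(equation (7) of the paper; indices shifted to `0,1,2,3`). -/
def hyE (a₁ a₂ a₃ a₄ : ℝ) (u : (Fin 4 → ℝ) → ℝ) (x : Fin 4 → ℝ) : ℝ :=
  a₄ * ((x 0 - x 1) * pd 2 u x * pd2 0 1 u x + (x 1 - x 2) * pd 0 u x * pd2 1 2 u x
        + (x 2 - x 0) * pd 1 u x * pd2 0 2 u x)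
  + a₃ * ((x 3 - x 1) * pd 0 u x * pd2 1 3 u x + (x 1 - x 0) * pd 3 u x * pd2 0 1 u x
        + (x 0 - x 3) * pd 1 u x * pd2 0 3 u x)
  + a₂ * ((x 2 - x 3) * pd 0 u x * pd2 2 3 u x + (x 0 - x 2) * pd 3 u x * pd2 0 2 u x
        + (x 3 - x 0) * pd 2 u x * pd2 0 3 u x)
  + a₁ * ((x 2 - x 1) * pd 3 u x * pd2 1 2 u x + (x 1 - x 3) * pd 2 u x * pd2 1 3 u x
        + (x 3 - x 2) * pd 1 u x * pd2 2 3 u x)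

section PartialDerivatives

variable {n : ℕ} {i j : Fin n} {x : Fin n → ℝ}

theorem pd_congr {f g : (Fin n → ℝ) → ℝ} (h : f =ᶠ[nhds x] g) : pd i f x = pd i g x := by
  rw [pd, pd, h.fderiv_eq]

theorem pd_mul {f g : (Fin n → ℝ) → ℝ} (hf : DifferentiableAt ℝ f x)
    (hg : DifferentiableAt ℝ g x) :
    pd i (fun y => f y * g y) x = f x * pd i g x + g x * pd i f x := by
  simp only [pd, fderiv_fun_mul hf hg, add_apply, smul_apply, smul_eq_mul]

theorem pd_comp {u : (Fin n → ℝ) → ℝ} {φ : ℝ → ℝ} (hu : DifferentiableAt ℝ u x)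
    (hφ : DifferentiableAt ℝ φ (u x)) :
    pd i (φ ∘ u) x = deriv φ (u x) * pd i u x := by
  rw [pd, (hφ.hasDerivAt.comp_hasFDerivAt x hu.hasFDerivAt).fderiv]
  rfl

theorem pd2_comp {U : Set (Fin n → ℝ)} {u : (Fin n → ℝ) → ℝ} {φ : ℝ → ℝ} (hU : IsOpen U)
    (hu : ContDiffOn ℝ 2 u U) (hφ : ContDiff ℝ 2 φ) (hx : x ∈ U) :
    pd2 i j (φ ∘ u) x
      = deriv (deriv φ) (u x) * pd i u x * pd j u x + deriv φ (u x) * pd2 i j u x := by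
  have hud : ∀ y ∈ U, DifferentiableAt ℝ u y := fun y hy =>
    (hu.contDiffAt (hU.mem_nhds hy)).differentiableAt (by norm_num)
  have hφd : Differentiable ℝ φ := hφ.differentiable (by norm_num)
  have hφ' : ContDiff ℝ 1 (deriv φ) := (contDiff_succ_iff_deriv.mp hφ).2.2
  have hpd : DifferentiableAt ℝ (pd j u) x :=
    (((hu.fderiv_of_isOpen hU (by norm_num : (1 : WithTop ℕ∞) + 1 ≤ 2)).clm_apply
      contDiffOn_const).contDiffAt (hU.mem_nhds hx)).differentiableAt one_ne_zero
  have hchain : pd j (φ ∘ u) =ᶠ[nhds x] fun y => (deriv φ ∘ u) y * pd j u y := by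
    filter_upwards [hU.mem_nhds hx] with y hy
    exact pd_comp (hud y hy) (hφd _)
  rw [pd2, pd_congr hchain,
    pd_mul ((hφ'.differentiable one_ne_zero _).comp x (hud x hx)) hpd,
    pd_comp (hud x hx) (hφ'.differentiable one_ne_zero _), pd2]
  simp only [Function.comp_apply]
  ring

end PartialDerivatives

/-- The `φ''` terms cancel within each bracket of `hyE`: there the three coefficients `xₐ - x_b`
sum to zero and multiply the same product `u_i u_j u_k`. -/
theorem hyE_eq_sq_mul_of_jet (a₁ a₂ a₃ a₄ c d : ℝ) (u v : (Fin 4 → ℝ) → ℝ) (x : Fin 4 → ℝ)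
    (h1 : ∀ j, pd j v x = c * pd j u x)
    (h2 : ∀ i j, pd2 i j v x = d * pd i u x * pd j u x + c * pd2 i j u x) :
    hyE a₁ a₂ a₃ a₄ v x = c ^ 2 * hyE a₁ a₂ a₃ a₄ u x := by
  simp only [hyE, h1, h2]
  ring

theorem hyE_comp (a₁ a₂ a₃ a₄ : ℝ) {U : Set (Fin 4 → ℝ)} (hU : IsOpen U)
    {u : (Fin 4 → ℝ) → ℝ} (hu : ContDiffOn ℝ 2 u U) {φ : ℝ → ℝ} (hφ : ContDiff ℝ 2 φ)
    {x : Fin 4 → ℝ} (hx : x ∈ U) :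
    hyE a₁ a₂ a₃ a₄ (φ ∘ u) x = deriv φ (u x) ^ 2 * hyE a₁ a₂ a₃ a₄ u x :=
  hyE_eq_sq_mul_of_jet _ _ _ _ _ _ _ _ _
    (fun _ => pd_comp ((hu.contDiffAt (hU.mem_nhds hx)).differentiableAt (by norm_num))
      (hφ.differentiable (by norm_num) _))
    (fun _ _ => pd2_comp hU hu hφ hx)

/-- if `u` solves equation (7) on `U`, then so does `φ ∘ u`
for any smooth `φ : ℝ → ℝ`. -/
theorem statement5 (a₁ a₂ a₃ a₄ : ℝ) (U : Set (Fin 4 → ℝ)) (hU : IsOpen U)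
    (u : (Fin 4 → ℝ) → ℝ) (hu : ContDiffOn ℝ ∞ u U)
    (hsol : ∀ x ∈ U, hyE a₁ a₂ a₃ a₄ u x = 0)
    (φ : ℝ → ℝ) (hφ : ContDiff ℝ ∞ φ) :
    ∀ x ∈ U, hyE a₁ a₂ a₃ a₄ (φ ∘ u) x = 0 := by
  intro x hx
  rw [hyE_comp a₁ a₂ a₃ a₄ hU (hu.of_le ENat.LEInfty.out) (hφ.of_le ENat.LEInfty.out) hx,
    hsol x hx, mul_zero]
end
end

section
/- Let U' ⊆ {x ∈ ℝ⁴ : x₃ > 0} be open and let u : U' → ℝ be a smooth solution of u₁₃ + u₂₄ + x₃(u₁₁u₂₂ − u₁₂²) = 0 on U'. Define Φ : U' → ℝ⁴ by Φ(x) = (x₁x₃, x₂/x₃², −1/(2x₃²), x₄). Suppose V ⊆ ℝ⁴ is open with Φ(U') ⊆ V and W : V → ℝ is a smooth function satisfying W(Φ(x)) = x₃·u(x) + x₁x₂²/(2x₃) for all x ∈ U'. Then at every point of Φ(U'), W satisfies the second heavenly equation W₁₃ + W₂₄ + W₁₁W₂₂ − W₁₂² = 0. -/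
open scoped ContDiff

noncomputable section

/-!
The Jacobian of `Φ` is triangular with diagonal `(x₃, x₃⁻², x₃⁻³, 1)`, so the chain rule
expresses the partial derivatives of `W` at `Φ x` through those of `W ∘ Φ = x₃ u + x₁x₂²/(2x₃)`
at `x`. Applying it to `W` and then to its first partial derivatives gives (indices are 1-based
here and 0-based in the code)
`W₁₁ = u₁₁/x₃`, `W₁₂ = x₃²u₁₂ + x₂`, `W₂₂ = x₃⁵u₂₂ + x₁x₃³`, `W₂₄ = x₃³u₂₄` and
`W₁₃ = x₃³u₁₃ − x₁x₃²u₁₁ + 2x₂x₃²u₁₂ + x₂²` at `Φ x`, whence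
`W₁₃ + W₂₄ + W₁₁W₂₂ − W₁₂² = x₃³ (u₁₃ + u₂₄ + x₃(u₁₁u₂₂ − u₁₂²)) = 0`.
-/

open Filter Topology

section PartialDerivative

variable {n : ℕ} {f g : (Fin n → ℝ) → ℝ} {x : Fin n → ℝ}

theorem pd_congr_of_eventuallyEq (h : f =ᶠ[𝓝 x] g) (i : Fin n) : pd i f x = pd i g x := by
  rw [pd, pd, h.fderiv_eq]

theorem ContDiffAt.differentiableAt_pd (h : ContDiffAt ℝ 2 f x) (i : Fin n) :
    DifferentiableAt ℝ (pd i f) x :=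
  ((h.fderiv_right (m := 1) (by norm_num)).clm_apply contDiffAt_const).differentiableAt
    one_ne_zero

theorem pd_const (c : ℝ) (i : Fin n) : pd i (fun _ => c) x = 0 := by
  simp [pd]

theorem pd_apply_self (i : Fin n) : pd i (fun z => z i) x = 1 := by
  simp [pd, (hasFDerivAt_apply i x).fderiv]

theorem pd_apply_of_ne {i j : Fin n} (h : i ≠ j) : pd i (fun z => z j) x = 0 := by
  simp [pd, (hasFDerivAt_apply j x).fderiv, h]

theorem pd_fun_add (hf : DifferentiableAt ℝ f x) (hg : DifferentiableAt ℝ g x) (i : Fin n) :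
    pd i (fun z => f z + g z) x = pd i f x + pd i g x := by
  simp [pd, fderiv_fun_add hf hg]

theorem pd_fun_sub (hf : DifferentiableAt ℝ f x) (hg : DifferentiableAt ℝ g x) (i : Fin n) :
    pd i (fun z => f z - g z) x = pd i f x - pd i g x := by
  simp [pd, fderiv_fun_sub hf hg]

theorem pd_fun_mul (hf : DifferentiableAt ℝ f x) (hg : DifferentiableAt ℝ g x) (i : Fin n) :
    pd i (fun z => f z * g z) x = pd i f x * g x + f x * pd i g x := by
  simp [pd, fderiv_fun_mul hf hg]
  ring

theorem pd_fun_pow (hf : DifferentiableAt ℝ f x) (k : ℕ) (i : Fin n) :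
    pd i (fun z => f z ^ k) x = k * f x ^ (k - 1) * pd i f x := by
  simp [pd, (hf.hasFDerivAt.pow k).fderiv, mul_assoc]

theorem pd_fun_inv (hf : DifferentiableAt ℝ f x) (hx : f x ≠ 0) (i : Fin n) :
    pd i (fun z => (f z)⁻¹) x = -pd i f x / f x ^ 2 := by
  rw [pd, show (fun z => (f z)⁻¹) = (fun y : ℝ => y⁻¹) ∘ f from rfl,
    fderiv_comp x (differentiableAt_inv hx) hf, fderiv_inv]
  simp [pd, div_eq_mul_inv, mul_comm]

theorem pd_fun_div (hf : DifferentiableAt ℝ f x) (hg : DifferentiableAt ℝ g x) (hx : g x ≠ 0)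
    (i : Fin n) : pd i (fun z => f z / g z) x = (pd i f x * g x - f x * pd i g x) / g x ^ 2 := by
  simp only [div_eq_mul_inv]
  rw [pd_fun_mul (g := fun z => (g z)⁻¹) hf (hg.inv hx), pd_fun_inv hg hx]
  field_simp
  ring

theorem pd_comp_s13 {m : ℕ} {f : (Fin m → ℝ) → ℝ} {Φ : (Fin n → ℝ) → Fin m → ℝ}
    (hf : DifferentiableAt ℝ f (Φ x)) (hΦ : DifferentiableAt ℝ Φ x) (i : Fin n) :
    pd i (f ∘ Φ) x = ∑ k, pd i (fun z => Φ z k) x * pd k f (Φ x) := by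
  simp only [pd, fderiv_comp x hf hΦ, fderiv_apply hΦ, ContinuousLinearMap.comp_apply]
  conv_lhs => rw [pi_eq_sum_univ' (fderiv ℝ Φ x (Pi.single i 1))]
  simp [map_sum]

end PartialDerivative

def heavenlyMap (x : Fin 4 → ℝ) : Fin 4 → ℝ :=
  ![x 0 * x 2, x 1 / x 2 ^ 2, -1 / (2 * x 2 ^ 2), x 3]

theorem differentiableAt_heavenlyMap {x : Fin 4 → ℝ} (hx : x 2 ≠ 0) :
    DifferentiableAt ℝ heavenlyMap x := by
  refine differentiableAt_pi.2 fun k => ?_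
  fin_cases k <;> simp only [heavenlyMap, Fin.zero_eta, Fin.mk_one, Fin.reduceFinMk,
    Matrix.cons_val] <;> fun_prop (disch := simp [hx])

theorem pd_heavenlyMap_of_comp_eventuallyEq {f g : (Fin 4 → ℝ) → ℝ} {x : Fin 4 → ℝ}
    (hx : x 2 ≠ 0) (hf : DifferentiableAt ℝ f (heavenlyMap x))
    (hfg : f ∘ heavenlyMap =ᶠ[𝓝 x] g) :
    pd 0 f (heavenlyMap x) = pd 0 g x / x 2 ∧
    pd 1 f (heavenlyMap x) = x 2 ^ 2 * pd 1 g x ∧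
    pd 2 f (heavenlyMap x)
      = x 2 ^ 3 * pd 2 g x - x 0 * x 2 ^ 2 * pd 0 g x + 2 * x 1 * x 2 ^ 2 * pd 1 g x ∧
    pd 3 f (heavenlyMap x) = pd 3 g x := by
  have chain (i : Fin 4) :
      pd i g x = ∑ k, pd i (fun z => heavenlyMap z k) x * pd k f (heavenlyMap x) :=
    (pd_congr_of_eventuallyEq hfg i).symm.trans (pd_comp_s13 hf (differentiableAt_heavenlyMap hx) i)
  -- so that unfolding `heavenlyMap` in the Jacobian entries leaves the base point alone
  set y := heavenlyMap x
  have e0 := chain 0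
  have e1 := chain 1
  have e2 := chain 2
  have e3 := chain 3
  simp (disch := first | fun_prop (disch := simp [hx]) | simp [hx]) only [Fin.sum_univ_four,
    heavenlyMap, Matrix.cons_val, pd_fun_mul, pd_fun_div, pd_fun_pow, pd_apply_self,
    pd_apply_of_ne, pd_const] at e0 e1 e2 e3
  norm_num at e0 e1 e2 e3
  field_simp at e1 e2
  refine ⟨?_, ?_, ?_, ?_⟩
  · field_simp
    linear_combination -e0
  · linear_combination -e1
  · linear_combination -e2 + x 0 * x 2 ^ 2 * e0 - 2 * x 1 * e1
  · linear_combination -e3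

section Transform

variable {U : Set (Fin 4 → ℝ)} {u W : (Fin 4 → ℝ) → ℝ}

theorem pd_heavenlyMap_of_transform (hU : IsOpen U) (hU2 : ∀ x ∈ U, x 2 ≠ 0)
    (hu : DifferentiableOn ℝ u U) (hW : ∀ x ∈ U, DifferentiableAt ℝ W (heavenlyMap x))
    (hWu : ∀ x ∈ U, W (heavenlyMap x) = x 2 * u x + x 0 * x 1 ^ 2 / (2 * x 2))
    {z : Fin 4 → ℝ} (hz : z ∈ U) :
    pd 0 W (heavenlyMap z) = pd 0 u z + z 1 ^ 2 / (2 * z 2 ^ 2) ∧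
    pd 1 W (heavenlyMap z) = z 2 ^ 3 * pd 1 u z + z 0 * z 1 * z 2 ∧
    pd 2 W (heavenlyMap z) = z 2 ^ 3 * u z + z 2 ^ 4 * pd 2 u z
      - z 0 * z 2 ^ 3 * pd 0 u z + 2 * z 1 * z 2 ^ 3 * pd 1 u z + z 0 * z 1 ^ 2 * z 2 ∧
    pd 3 W (heavenlyMap z) = z 2 * pd 3 u z := by
  have hz2 := hU2 z hz
  have huz := hu.differentiableAt (hU.mem_nhds hz)
  have hWz : W ∘ heavenlyMap =ᶠ[𝓝 z] fun y => y 2 * u y + y 0 * y 1 ^ 2 / (2 * y 2) :=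
    eventuallyEq_of_mem (hU.mem_nhds hz) hWu
  obtain ⟨e0, e1, e2, e3⟩ := pd_heavenlyMap_of_comp_eventuallyEq hz2 (hW z hz) hWz
  simp (disch := first | fun_prop (disch := simp [hz2]) | simp [hz2]) only [pd_fun_add,
    pd_fun_mul, pd_fun_div, pd_fun_pow, pd_apply_self, pd_apply_of_ne, pd_const] at e0 e1 e2 e3
  rw [e0, e1, e2, e3]
  refine ⟨?_, ?_, ?_, ?_⟩ <;> (field_simp; ring)

theorem pd2_heavenlyMap_of_transform (hU : IsOpen U) (hU2 : ∀ x ∈ U, x 2 ≠ 0)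
    (hu : ContDiffOn ℝ 2 u U) (hW : ∀ x ∈ U, ContDiffAt ℝ 2 W (heavenlyMap x))
    (hWu : ∀ x ∈ U, W (heavenlyMap x) = x 2 * u x + x 0 * x 1 ^ 2 / (2 * x 2))
    {x : Fin 4 → ℝ} (hx : x ∈ U) :
    pd2 0 0 W (heavenlyMap x) = pd2 0 0 u x / x 2 ∧
    pd2 0 1 W (heavenlyMap x) = x 2 ^ 2 * pd2 0 1 u x + x 1 ∧
    pd2 1 1 W (heavenlyMap x) = x 2 ^ 5 * pd2 1 1 u x + x 0 * x 2 ^ 3 ∧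
    pd2 0 2 W (heavenlyMap x) = x 2 ^ 3 * pd2 0 2 u x - x 0 * x 2 ^ 2 * pd2 0 0 u x
      + 2 * x 1 * x 2 ^ 2 * pd2 0 1 u x + x 1 ^ 2 ∧
    pd2 1 3 W (heavenlyMap x) = x 2 ^ 3 * pd2 1 3 u x := by
  have hx2 := hU2 x hx
  have hux := hu.contDiffAt (hU.mem_nhds hx)
  have hu' := hux.differentiableAt two_ne_zero
  have hu0 := hux.differentiableAt_pd 0
  have hu1 := hux.differentiableAt_pd 1
  have hu2 := hux.differentiableAt_pd 2
  have hu3 := hux.differentiableAt_pd 3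
  have hW1 (z) (hz : z ∈ U) := pd_heavenlyMap_of_transform hU hU2
    (hu.differentiableOn two_ne_zero) (fun z hz => (hW z hz).differentiableAt two_ne_zero) hWu hz
  have hW2 (i : Fin 4) {g} (hg : Set.EqOn (pd i W ∘ heavenlyMap) g U) :=
    pd_heavenlyMap_of_comp_eventuallyEq hx2 ((hW x hx).differentiableAt_pd i)
      (hg.eventuallyEq_of_mem (hU.mem_nhds hx))
  obtain ⟨h00, -, -, -⟩ := hW2 0 fun z hz => (hW1 z hz).1
  obtain ⟨h01, h11, -, -⟩ := hW2 1 fun z hz => (hW1 z hz).2.1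
  obtain ⟨h02, -, -, -⟩ := hW2 2 fun z hz => (hW1 z hz).2.2.1
  obtain ⟨-, h13, -, -⟩ := hW2 3 fun z hz => (hW1 z hz).2.2.2
  simp (disch := first | fun_prop (disch := simp [hx2]) | simp [hx2]) only [pd_fun_add,
    pd_fun_sub, pd_fun_mul, pd_fun_div, pd_fun_pow, pd_apply_self, pd_apply_of_ne, pd_const]
    at h00 h01 h11 h02 h13
  simp only [pd2, h00, h01, h11, h02, h13]
  refine ⟨?_, ?_, ?_, ?_, ?_⟩ <;> (field_simp; ring)

end Transform

/-- the point transformation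
`Φ(x) = (x₁x₃, x₂/x₃², −1/(2x₃²), x₄)`, `W∘Φ = x₃·u + x₁x₂²/(2x₃)`, maps solutions of the
second-heavenly-type equation with `f = x₃` to solutions of the second heavenly equation. -/
theorem statement13 (U' : Set (Fin 4 → ℝ)) (hU' : IsOpen U')
    (hU'pos : ∀ x ∈ U', x 2 > 0)
    (u : (Fin 4 → ℝ) → ℝ) (hu : ContDiffOn ℝ ∞ u U')
    (hsol : ∀ x ∈ U',
      pd2 0 2 u x + pd2 1 3 u x
        + x 2 * (pd2 0 0 u x * pd2 1 1 u x - (pd2 0 1 u x) ^ 2) = 0)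
    (Φ : (Fin 4 → ℝ) → (Fin 4 → ℝ))
    (hΦ : Φ = fun x => ![x 0 * x 2, x 1 / (x 2) ^ 2, -1 / (2 * (x 2) ^ 2), x 3])
    (V : Set (Fin 4 → ℝ)) (hV : IsOpen V) (hΦV : Φ '' U' ⊆ V)
    (W : (Fin 4 → ℝ) → ℝ) (hW : ContDiffOn ℝ ∞ W V)
    (hWu : ∀ x ∈ U', W (Φ x) = x 2 * u x + x 0 * (x 1) ^ 2 / (2 * x 2)) :
    ∀ x ∈ U',
      pd2 0 2 W (Φ x) + pd2 1 3 W (Φ x)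
        + pd2 0 0 W (Φ x) * pd2 1 1 W (Φ x) - (pd2 0 1 W (Φ x)) ^ 2 = 0 := by
  obtain rfl : Φ = heavenlyMap := hΦ
  intro x hx
  have hW2 (z) (hz : z ∈ U') : ContDiffAt ℝ 2 W (heavenlyMap z) :=
    (hW.contDiffAt (hV.mem_nhds (hΦV ⟨z, hz, rfl⟩))).of_le (WithTop.coe_le_coe.2 le_top)
  obtain ⟨h00, h01, h11, h02, h13⟩ := pd2_heavenlyMap_of_transform hU'
    (fun z hz => (hU'pos z hz).ne') (hu.of_le (WithTop.coe_le_coe.2 le_top)) hW2 hWu hx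
  have hx2 : x 2 ≠ 0 := (hU'pos x hx).ne'
  rw [h00, h01, h11, h02, h13]
  field_simp
  linear_combination x 2 ^ 3 * hsol x hx
end
end

section
/- Let U ⊆ ℝ⁴ be open and let u : U → ℝ be a smooth solution of the equation u₁₃u₂₄ − u₁₄u₂₃ = u₁ on U. For λ ∈ ℝ define the vector fields X = u₁₃∂₄ − u₁₄∂₃ + (λ−x₂)∂₁ and Y = u₂₃∂₄ − u₂₄∂₃ + (λ−x₂)∂₂. Then for every λ ∈ ℝ and every x ∈ U, the vector [X,Y](x) lies in the linear span of X(x) and Y(x). -/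
/-!
In fact `[X, Y] = X`. The `∂₁` and `∂₂` components of the bracket are immediate. For `k = 3, 4`
the identity `X(u₂ₖ) − Y(u₁ₖ) = ∂ₖ(u₁₃u₂₄ − u₁₄u₂₃)` holds for every `C³` function `u`, because
third partial derivatives commute; the equation turns its right side into `u₁ₖ`, which yields the
`∂₄` and `∂₃` components of `[X, Y]`. Indices are shifted down by one in the code:
`pd2 0 2 u` is `u₁₃`.
-/

open scoped ContDiff

noncomputable section

open Filter Topology

section Partials

variable {n : ℕ} {f : (Fin n → ℝ) → ℝ} {x : Fin n → ℝ}

lemma fderiv_apply_eq_sum_pd (v : Fin n → ℝ) : fderiv ℝ f x v = ∑ i, v i * pd i f x := by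
  conv_lhs => rw [← Finset.univ_sum_single v]
  simp only [map_sum, pd]
  refine Finset.sum_congr rfl fun i _ => ?_
  rw [← smul_eq_mul, ← map_smul, ← Pi.single_smul', smul_eq_mul, mul_one]

lemma contDiffAt_pd {r s : WithTop ℕ∞} (hf : ContDiffAt ℝ s f x) (hrs : r + 1 ≤ s) (j : Fin n) :
    ContDiffAt ℝ r (pd j f) x :=
  (hf.fderiv_right hrs).clm_apply contDiffAt_const

lemma pd2_comm (hf : ContDiffAt ℝ 2 f x) (i j : Fin n) : pd2 i j f x = pd2 j i f x := by
  have hd : DifferentiableAt ℝ (fderiv ℝ f) x :=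
    (hf.fderiv_right le_rfl).differentiableAt one_ne_zero
  have hpd2 : ∀ i j : Fin n,
      pd2 i j f x = fderiv ℝ (fderiv ℝ f) x (Pi.single i 1) (Pi.single j 1) := by
    intro i j
    unfold pd2 pd
    rw [fderiv_clm_apply hd (differentiableAt_const _)]
    simp
  rw [hpd2, hpd2]
  exact hf.isSymmSndFDerivAt (by simp [minSmoothness_of_isRCLikeNormedField]) _ _

variable (hf : ContDiffAt ℝ 3 f x) (i j k : Fin n)
include hf

lemma differentiableAt_pd2 : DifferentiableAt ℝ (pd2 i j f) x :=
  (contDiffAt_pd (contDiffAt_pd (r := 2) hf (by norm_num) j) (by norm_num) i).differentiableAt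
    one_ne_zero

lemma pd_pd2_left_comm : pd i (pd2 j k f) x = pd j (pd2 i k f) x :=
  pd2_comm (contDiffAt_pd hf (by norm_num) k) i j

lemma pd_pd2_right_comm : pd i (pd2 j k f) x = pd i (pd2 k j f) x := by
  have hev : pd2 j k f =ᶠ[𝓝 x] pd2 k j f := by
    filter_upwards [(hf.of_le (by norm_num) : ContDiffAt ℝ 2 f x).eventually (by simp)] with y hy
    exact pd2_comm hy j k
  simp only [pd, hev.fderiv_eq]

lemma pd_pd2_outer_comm : pd i (pd2 j k f) x = pd k (pd2 j i f) x := by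
  rw [pd_pd2_right_comm hf, pd_pd2_left_comm hf, pd_pd2_right_comm hf]

end Partials

section LaxPair

def laxField (a b : (Fin 4 → ℝ) → ℝ) (m : Fin 4) (lam : ℝ) (x : Fin 4 → ℝ) : Fin 4 → ℝ :=
  a x • (Pi.single 3 1 : Fin 4 → ℝ) - b x • (Pi.single 2 1 : Fin 4 → ℝ)
    + (lam - x 1) • (Pi.single m 1 : Fin 4 → ℝ)

abbrev laxX (u : (Fin 4 → ℝ) → ℝ) : ℝ → (Fin 4 → ℝ) → Fin 4 → ℝ :=
  laxField (pd2 0 2 u) (pd2 0 3 u) 0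

abbrev laxY (u : (Fin 4 → ℝ) → ℝ) : ℝ → (Fin 4 → ℝ) → Fin 4 → ℝ :=
  laxField (pd2 1 2 u) (pd2 1 3 u) 1

def hessianMinor (u : (Fin 4 → ℝ) → ℝ) (x : Fin 4 → ℝ) : ℝ :=
  pd2 0 2 u x * pd2 1 3 u x - pd2 0 3 u x * pd2 1 2 u x

lemma fderiv_laxField_apply {a b : (Fin 4 → ℝ) → ℝ} {x : Fin 4 → ℝ}
    (ha : DifferentiableAt ℝ a x) (hb : DifferentiableAt ℝ b x) (m : Fin 4) (lam : ℝ)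
    (v : Fin 4 → ℝ) :
    fderiv ℝ (laxField a b m lam) x v = fderiv ℝ a x v • (Pi.single 3 1 : Fin 4 → ℝ)
      - fderiv ℝ b x v • (Pi.single 2 1 : Fin 4 → ℝ) - v 1 • (Pi.single m 1 : Fin 4 → ℝ) := by
  have hc : HasFDerivAt (fun y : Fin 4 → ℝ => lam - y 1)
      (-ContinuousLinearMap.proj (R := ℝ) (φ := fun _ : Fin 4 => ℝ) 1) x :=
    (hasFDerivAt_apply (𝕜 := ℝ) 1 x).const_sub lam
  have h : HasFDerivAt (laxField a b m lam) _ x :=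
    ((ha.hasFDerivAt.smul_const (Pi.single 3 1 : Fin 4 → ℝ)).sub
      (hb.hasFDerivAt.smul_const (Pi.single 2 1 : Fin 4 → ℝ))).add
      (hc.smul_const (Pi.single m 1 : Fin 4 → ℝ))
  rw [h.fderiv]
  simp [sub_eq_add_neg]

variable {u : (Fin 4 → ℝ) → ℝ} {x : Fin 4 → ℝ}

lemma pd_hessianMinor (hu : ContDiffAt ℝ 3 u x) (k : Fin 4) :
    pd k (hessianMinor u) x = pd2 0 2 u x * pd k (pd2 1 3 u) x + pd2 1 3 u x * pd k (pd2 0 2 u) x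
      - (pd2 0 3 u x * pd k (pd2 1 2 u) x + pd2 1 2 u x * pd k (pd2 0 3 u) x) := by
  have hd : ∀ i j : Fin 4, HasFDerivAt (pd2 i j u) (fderiv ℝ (pd2 i j u) x) x :=
    fun i j => (differentiableAt_pd2 hu i j).hasFDerivAt
  have h : HasFDerivAt (hessianMinor u) _ x :=
    ((hd 0 2).mul (hd 1 3)).sub ((hd 0 3).mul (hd 1 2))
  rw [pd, h.fderiv]
  simp [pd]

lemma fderiv_pd2_laxX_sub_fderiv_pd2_laxY (hu : ContDiffAt ℝ 3 u x) (lam : ℝ) (k : Fin 4) :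
    fderiv ℝ (pd2 1 k u) x (laxX u lam x) - fderiv ℝ (pd2 0 k u) x (laxY u lam x)
      = pd k (hessianMinor u) x := by
  rw [fderiv_apply_eq_sum_pd, fderiv_apply_eq_sum_pd, pd_hessianMinor hu, Fin.sum_univ_four,
    Fin.sum_univ_four]
  simp only [laxField, Pi.add_apply, Pi.sub_apply, Pi.smul_apply, Pi.single_apply, smul_eq_mul,
    Fin.reduceEq, if_true, if_false]
  rw [pd_pd2_left_comm hu 0 1, pd_pd2_outer_comm hu 2 1, pd_pd2_outer_comm hu 3 1,
    pd_pd2_outer_comm hu 2 0, pd_pd2_outer_comm hu 3 0]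
  ring

lemma lieBr_laxX_laxY (hu : ContDiffAt ℝ 3 u x) (hsol : hessianMinor u =ᶠ[𝓝 x] pd 0 u)
    (lam : ℝ) : lieBr (laxX u lam) (laxY u lam) x = laxX u lam x := by
  have hcoeff : ∀ k : Fin 4, fderiv ℝ (pd2 1 k u) x (laxX u lam x)
      - fderiv ℝ (pd2 0 k u) x (laxY u lam x) = pd2 0 k u x := fun k => by
    rw [fderiv_pd2_laxX_sub_fderiv_pd2_laxY hu, pd, hsol.fderiv_eq]
    exact pd2_comm (hu.of_le (by norm_num)) k 0
  have hX1 : laxX u lam x 1 = 0 := by simp [laxField]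
  have hY1 : laxY u lam x 1 = lam - x 1 := by simp [laxField]
  rw [lieBr, fderiv_laxField_apply (differentiableAt_pd2 hu 1 2) (differentiableAt_pd2 hu 1 3),
    fderiv_laxField_apply (differentiableAt_pd2 hu 0 2) (differentiableAt_pd2 hu 0 3), hX1, hY1]
  conv_rhs => rw [laxX, laxField]
  linear_combination (norm := module) hcoeff 2 • (Pi.single 3 1 : Fin 4 → ℝ)
    - hcoeff 3 • (Pi.single 2 1 : Fin 4 → ℝ)

end LaxPair

/-- Lax pair (Frobenius integrability) for the first-heavenly-type
equation with `f = u₁`, for every value of the spectral parameter `λ`. -/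
theorem statement15 (U : Set (Fin 4 → ℝ)) (hU : IsOpen U)
    (u : (Fin 4 → ℝ) → ℝ) (hu : ContDiffOn ℝ ∞ u U)
    (hsol : ∀ x ∈ U, pd2 0 2 u x * pd2 1 3 u x - pd2 0 3 u x * pd2 1 2 u x = pd 0 u x)
    (X Y : ℝ → (Fin 4 → ℝ) → (Fin 4 → ℝ))
    (hX : X = fun lam x => pd2 0 2 u x • (Pi.single 3 1 : Fin 4 → ℝ)
        - pd2 0 3 u x • (Pi.single 2 1 : Fin 4 → ℝ)
        + (lam - x 1) • (Pi.single 0 1 : Fin 4 → ℝ))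
    (hY : Y = fun lam x => pd2 1 2 u x • (Pi.single 3 1 : Fin 4 → ℝ)
        - pd2 1 3 u x • (Pi.single 2 1 : Fin 4 → ℝ)
        + (lam - x 1) • (Pi.single 1 1 : Fin 4 → ℝ)) :
    ∀ lam : ℝ, ∀ x ∈ U,
      lieBr (X lam) (Y lam) x ∈ Submodule.span ℝ {X lam x, Y lam x} := by
  intro lam x hx
  obtain rfl : X = laxX u := hX
  obtain rfl : Y = laxY u := hY
  have hux : ContDiffAt ℝ 3 u x := (hu.contDiffAt (hU.mem_nhds hx)).of_le ENat.LEInfty.out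
  have hsolx : hessianMinor u =ᶠ[𝓝 x] pd 0 u := eventually_of_mem (hU.mem_nhds hx) hsol
  rw [lieBr_laxX_laxY hux hsolx lam]
  exact Submodule.subset_span (Set.mem_insert _ _)
end
end
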